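/- Let G be a group, i ∈ G a central element with i² = 1 and i ≠ 1, K a subgroup of G, and m : K → ZMod 2 a group homomorphism. Define f : K → G by f(k) = k * i^(m(k).val). Then f is injective if and only if (i ∉ K or m(⟨i, proof that i ∈ K⟩) = 0), i.e., f is injective iff either i does not belong to K, or i ∈ K and i lies in the kernel of m. -/
import Mathlib


theorem twisted_inclusion_injective_iff {G : Type*} [Group G]
    (i : G) (hcentral : ∀ g : G, i * g = g * i) (hi : i ^ 2 = 1) (hine : i ≠ 1)
    (K : Subgroup G) (m : K → ZMod 2)
    (hm : ∀ k₁ k₂ : K, m (k₁ * k₂) = m k₁ + m k₂) :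
    Function.Injective (fun k : K => (k : G) * i ^ (m k).val) ↔
      (i ∉ K ∨ ∀ hiK : i ∈ K, m ⟨i, hiK⟩ = 0) := by
  have hadd : ∀ x : ZMod 2, x + x = 0 := by decide
  have hm1 : m 1 = 0 := by
    have h := hm 1 1
    rw [mul_one] at h
    rw [h]
    exact hadd _
  have hminv : ∀ k : K, m k⁻¹ = m k := by
    intro k
    have h := hm k⁻¹ k
    rw [inv_mul_cancel, hm1] at h
    have h3 := hadd (m k)
    calc m k⁻¹ = m k⁻¹ + (m k + m k) := by rw [h3, add_zero]
      _ = (m k⁻¹ + m k) + m k := by ring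
      _ = 0 + m k := by rw [← h]
      _ = m k := zero_add _
  constructor
  · intro hinj
    by_contra hcon
    push_neg at hcon
    obtain ⟨hiK, hne⟩ := hcon
    obtain ⟨hiK, hne⟩ := hne
    have hval : (m ⟨i, hiK⟩).val = 1 := by
      have : m ⟨i, hiK⟩ = 1 := by
        revert hne; generalize m ⟨i, hiK⟩ = x; revert x; decide
      rw [this]; rfl
    have h1 : ((⟨i, hiK⟩ : K) : G) * i ^ (m ⟨i, hiK⟩).val = ((1 : K) : G) * i ^ (m 1).val := by
      rw [hval, hm1]
      simp [pow_two] at hi ⊢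
      exact hi
    have := hinj h1
    apply hine
    exact congrArg Subtype.val this
  · intro h k₁ k₂ heq
    simp only at heq
    by_cases hmm : m k₁ = m k₂
    · rw [hmm] at heq
      exact Subtype.ext (mul_right_cancel heq)
    · exfalso
      -- the vals differ by one; show i ∈ K
      have hii : i⁻¹ = i := by
        rw [pow_two] at hi
        exact inv_eq_of_mul_eq_one_right hi
      have hcases : ((m k₁) = 0 ∧ (m k₂) = 1) ∨ ((m k₁) = 1 ∧ (m k₂) = 0) := by
        revert hmm; generalize m k₁ = x; generalize m k₂ = y; revert x y; decide
      have key : (↑(k₂⁻¹ * k₁) : G) = i := by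
        push_cast
        rcases hcases with ⟨h1, h2⟩ | ⟨h1, h2⟩
        · rw [h1, h2] at heq
          simp only [ZMod.val_zero, ZMod.val_one, pow_zero, pow_one, mul_one] at heq
          rw [heq]; group
        · rw [h1, h2] at heq
          simp only [ZMod.val_zero, ZMod.val_one, pow_zero, pow_one, mul_one] at heq
          rw [← heq, mul_inv_rev, hii, mul_assoc, inv_mul_cancel, mul_one]
      have hiK : i ∈ K := key ▸ (k₂⁻¹ * k₁).2
      have h0 := (h.resolve_left (not_not_intro hiK)) hiK
      have : (⟨i, hiK⟩ : K) = k₂⁻¹ * k₁ := Subtype.ext key.symm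
      rw [this, hm k₂⁻¹ k₁, hminv] at h0
      -- m k₂ + m k₁ = 0 implies m k₁ = m k₂ in ZMod 2
      apply hmm
      revert h0 hmm; generalize m k₁ = x; generalize m k₂ = y; revert x y; decide
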